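/- arXiv:2602.09360 — 6 statements merged into one kernel-verified Lean document; each statement's English description precedes it below -/
import Mathlib

section
/- If E is a Σ_ucr-controllability set from G to R, then for the downward-closed set P(E) = ⋃_{W∈E} 𝒫(W), the witnesses W' in conditions (a) and (b) of the definition of controllability set can additionally be chosen to satisfy W' ⊆ ⋃_{(x,z)∈W} {x' : x →σ x'} × {z' : z →σ z'}. -/
/-- An automaton with state type `S` and event alphabet `E`:
a transition relation and a set of initial states. -/
structure Automaton (S : Type) (E : Type) where
  trans : S → E → S → Prop
  init : Set S

/-- Extension of the transition relation to finite event sequences. -/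
def TransSeq {S E : Type} (G : Automaton S E) : S → List E → S → Prop
  | x, [], x' => x = x'
  | x, σ :: s, x'' => ∃ x', G.trans x σ x' ∧ TransSeq G x' s x''

/-- `x` is `s`-reachable in `G`. -/
def ReachSeq {S E : Type} (G : Automaton S E) (s : List E) (x : S) : Prop :=
  ∃ x₀ ∈ G.init, TransSeq G x₀ s x

/-- `x` is reachable in `G`. -/
def Reachable {S E : Type} (G : Automaton S E) (x : S) : Prop :=
  ∃ s : List E, ReachSeq G s x

/-- The language of an automaton: all event sequences executable from some initial state. -/
def Lang {S E : Type} (G : Automaton S E) : Set (List E) :=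
  {s | ∃ x, ReachSeq G s x}

/-- `Φ` is a simulation from `G` to `R`. -/
def IsSimulation {X Z E : Type} (G : Automaton X E) (R : Automaton Z E)
    (Φ : Set (X × Z)) : Prop :=
  (∀ x₀ ∈ G.init, ∃ z₀ ∈ R.init, (x₀, z₀) ∈ Φ) ∧
  (∀ p ∈ Φ, ∀ (σ : E), ∀ x', G.trans p.1 σ x' →
    ∃ z', R.trans p.2 σ z' ∧ (x', z') ∈ Φ)

/-- `G` is simulated by `R` (`G ⊑ R`). -/
def Simulated {X Z E : Type} (G : Automaton X E) (R : Automaton Z E) : Prop :=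
  ∃ Φ, IsSimulation G R Φ

/-- `Φ` is a covariant-contravariant simulation from `G` to `R`, with required events `Sr`. -/
def IsCCSimulation {X Z E : Type} (Sr : Set E) (G : Automaton X E) (R : Automaton Z E)
    (Φ : Set (X × Z)) : Prop :=
  IsSimulation G R Φ ∧
  (∀ p ∈ Φ, ∀ σ ∈ Sr, ∀ z', R.trans p.2 σ z' →
    ∃ x', G.trans p.1 σ x' ∧ (x', z') ∈ Φ)

/-- `G` is cc-simulated by `R` (`G ⊑_cc R`). -/
def CCSimulated {X Z E : Type} (Sr : Set E) (G : Automaton X E) (R : Automaton Z E) : Prop :=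
  ∃ Φ, IsCCSimulation Sr G R Φ

/-- `Φ` is a bisimulation from `G` to `R`: both `Φ` and its inverse are simulations. -/
def IsBisimulation {X Z E : Type} (G : Automaton X E) (R : Automaton Z E)
    (Φ : Set (X × Z)) : Prop :=
  IsSimulation G R Φ ∧ IsSimulation R G {p | (p.2, p.1) ∈ Φ}

/-- `G` is bisimilar to `R` (`G ≃ R`). -/
def Bisimilar {X Z E : Type} (G : Automaton X E) (R : Automaton Z E) : Prop :=
  ∃ Φ, IsBisimulation G R Φ

/-- `Φ` is a `Σ_uc`-simulation from `G` to `R`. -/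
def IsUcSimulation {X Z E : Type} (Suc : Set E) (G : Automaton X E) (R : Automaton Z E)
    (Φ : Set (X × Z)) : Prop :=
  (∀ x₀ ∈ G.init, ∃ z₀ ∈ R.init, (x₀, z₀) ∈ Φ) ∧
  (∀ p ∈ Φ, ∀ σ ∈ Suc, ∀ x', G.trans p.1 σ x' →
    ∃ z', R.trans p.2 σ z' ∧ (x', z') ∈ Φ)

/-- `Φ` is a `Σ_ucr`-simulation from `G` to `R`:
(initial state), (Σ_uc-forward) and (Σ_r-backward). -/
def IsUcrSimulation {X Z E : Type} (Suc Sr : Set E) (G : Automaton X E) (R : Automaton Z E)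
    (Φ : Set (X × Z)) : Prop :=
  IsUcSimulation Suc G R Φ ∧
  (∀ p ∈ Φ, ∀ σ ∈ Sr, ∀ z', R.trans p.2 σ z' →
    ∃ x', G.trans p.1 σ x' ∧ (x', z') ∈ Φ)

/-- Synchronous composition `S || G`. -/
def Sync {Y X E : Type} (S : Automaton Y E) (G : Automaton X E) : Automaton (Y × X) E where
  trans p σ q := S.trans p.1 σ q.1 ∧ G.trans p.2 σ q.2
  init := S.init ×ˢ G.init

/-- `S` is `Σ_uc`-admissible with respect to `G`. -/
def Admissible {Y X E : Type} (Suc : Set E) (S : Automaton Y E) (G : Automaton X E) : Prop :=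
  ∀ p : Y × X, Reachable (Sync S G) p → ∀ σ ∈ Suc,
    (∃ x', G.trans p.2 σ x') → ∃ q, (Sync S G).trans p σ q

/-- `match_{G,R}(W, σ, W')`. -/
def MatchW {X Z E : Type} (G : Automaton X E) (R : Automaton Z E)
    (W : Set (X × Z)) (σ : E) (W' : Set (X × Z)) : Prop :=
  ∀ p ∈ W, ∀ x', G.trans p.1 σ x' →
    ∃ z', R.trans p.2 σ z' ∧ (x', z') ∈ W'

/-- `Ecs` is a `Σ_ucr`-controllability set from `G` to `R`. -/
def ControlSet {X Z E : Type} (Suc Sr : Set E) (G : Automaton X E) (R : Automaton Z E)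
    (Ecs : Set (Set (X × Z))) : Prop :=
  (∃ W₀ ∈ Ecs, ∀ x₀ ∈ G.init, ∃ z₀ ∈ R.init, (x₀, z₀) ∈ W₀) ∧
  (∀ W ∈ Ecs, ∀ σ ∈ Suc, ∃ W' ∈ Ecs, MatchW G R W σ W') ∧
  (∀ W ∈ Ecs, ∀ p ∈ W, ∀ σ ∈ Sr, ∀ z', R.trans p.2 σ z' →
    ∃ x', ∃ W' ∈ Ecs, G.trans p.1 σ x' ∧ (x', z') ∈ W' ∧ MatchW G R W σ W')

/-- The downward closure `P(E) = ⋃_{W ∈ E} 𝒫(W)`. -/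
def PE {X Z : Type} (Ecs : Set (Set (X × Z))) : Set (Set (X × Z)) :=
  {W | ∃ W' ∈ Ecs, W ⊆ W'}

/-- `⋃_{(x,z) ∈ W} {x' : x →σ x'} × {z' : z →σ z'}`. -/
def SuccSet {X Z E : Type} (G : Automaton X E) (R : Automaton Z E)
    (W : Set (X × Z)) (σ : E) : Set (X × Z) :=
  {q | ∃ p ∈ W, G.trans p.1 σ q.1 ∧ R.trans p.2 σ q.2}

/-- The automaton `𝒜(E)` induced by a `Σ_ucr`-controllability set `Ecs`.
Its states are the members of `P(Ecs)` (enforced in the transition relation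
and initial-state set). -/
def AutA {X Z E : Type} (G : Automaton X E) (R : Automaton Z E)
    (Ecs : Set (Set (X × Z))) : Automaton (Set (X × Z)) E where
  trans W σ W' :=
    W ∈ PE Ecs ∧ W' ∈ PE Ecs ∧
    (∃ p ∈ W, ∃ q ∈ W', G.trans p.1 σ q.1 ∧ R.trans p.2 σ q.2) ∧
    MatchW G R W σ W' ∧ W' ⊆ SuccSet G R W σ
  init := {W₀ | W₀ ∈ PE Ecs ∧ W₀ ⊆ G.init ×ˢ R.init ∧
    ∀ x₀ ∈ G.init, ∃ z₀ ∈ R.init, (x₀, z₀) ∈ W₀}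

/-- A deterministic automaton: a single initial state, and at most one
`σ`-successor of each state. -/
def Deterministic {S E : Type} (G : Automaton S E) : Prop :=
  (∃ x₀, G.init = {x₀}) ∧
  ∀ x (σ : E) x₁ x₂, G.trans x σ x₁ → G.trans x σ x₂ → x₁ = x₂

/-- `Φ` is uniform with respect to `Sr`. -/
def UniformRel {X Z E : Type} (Sr : Set E) (G : Automaton X E) (R : Automaton Z E)
    (Φ : Set (X × Z)) : Prop :=
  ∀ (s : List E), ∀ p₁ ∈ Φ, ∀ p₂ ∈ Φ,
    ReachSeq G s p₁.1 → ReachSeq G s p₂.1 → ReachSeq R s p₁.2 → ReachSeq R s p₂.2 →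
    ∀ σ ∈ Sr, (∃ z', R.trans p₁.2 σ z') → ∀ x₂', G.trans p₂.1 σ x₂' →
      ∃ z₂', R.trans p₂.2 σ z₂' ∧ (x₂', z₂') ∈ Φ

/-- The fixpoint operator `F_{(G,R)}`. -/
def Fop {X Z E : Type} (Suc Sr : Set E) (G : Automaton X E) (R : Automaton Z E)
    (Ecs : Set (Set (X × Z))) : Set (Set (X × Z)) :=
  {W | W ∈ Ecs ∧
    (∀ σ ∈ Suc, ∃ W' ∈ Ecs, MatchW G R W σ W') ∧
    (∀ p ∈ W, ∀ σ ∈ Sr, ∀ z', R.trans p.2 σ z' →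
      ∃ x', ∃ W' ∈ Ecs, G.trans p.1 σ x' ∧ (x', z') ∈ W' ∧ MatchW G R W σ W')}

/-- The greatest fixpoint `E↑` of `F_{(G,R)}`: the union of all post-fixpoints. -/
def Egfp {X Z E : Type} (Suc Sr : Set E) (G : Automaton X E) (R : Automaton Z E) :
    Set (Set (X × Z)) :=
  ⋃₀ {Ecs | Ecs ⊆ Fop Suc Sr G R Ecs}

/-! A witness `W'` obtained for some `V ∈ E` with `W ⊆ V` can be cut down to
`W' ∩ SuccSet G R W σ`: matching the pairs of `W` only ever uses pairs of σ-successors of `W`,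
and `P(E)` is closed under taking subsets. -/

section StrongWitness

variable {X Z E : Type} {G : Automaton X E} {R : Automaton Z E}
  {W V W' : Set (X × Z)} {σ : E}

theorem MatchW.mono_left (h : MatchW G R V σ W') (hWV : W ⊆ V) : MatchW G R W σ W' :=
  fun p hp => h p (hWV hp)

theorem MatchW.inter_succSet (h : MatchW G R W σ W') :
    MatchW G R W σ (W' ∩ SuccSet G R W σ) := by
  intro p hp x' hx'
  obtain ⟨z', hz', hmem⟩ := h p hp x' hx'
  exact ⟨z', hz', hmem, p, hp, hx', hz'⟩

theorem inter_mem_PE {Ecs : Set (Set (X × Z))} (hV : V ∈ Ecs) (S : Set (X × Z)) :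
    V ∩ S ∈ PE Ecs :=
  ⟨V, hV, Set.inter_subset_left⟩

end StrongWitness

/-- for the downward closure, witnesses in conditions (a) and (b)
can additionally be chosen inside the set of σ-successors. -/
theorem controlSet_downward_closure_strong_witnesses {E X Z : Type} (Suc Sr : Set E)
    (G : Automaton X E) (R : Automaton Z E) (Ecs : Set (Set (X × Z)))
    (hE : ControlSet Suc Sr G R Ecs) :
    (∀ W ∈ PE Ecs, ∀ σ ∈ Suc, ∃ W' ∈ PE Ecs,
      MatchW G R W σ W' ∧ W' ⊆ SuccSet G R W σ) ∧
    (∀ W ∈ PE Ecs, ∀ p ∈ W, ∀ σ ∈ Sr, ∀ z', R.trans p.2 σ z' →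
      ∃ x', ∃ W' ∈ PE Ecs, G.trans p.1 σ x' ∧ (x', z') ∈ W' ∧
        MatchW G R W σ W' ∧ W' ⊆ SuccSet G R W σ) := by
  obtain ⟨-, hUc, hReq⟩ := hE
  constructor
  · rintro W ⟨V, hV, hWV⟩ σ hσ
    obtain ⟨V', hV', hm⟩ := hUc V hV σ hσ
    exact ⟨V' ∩ SuccSet G R W σ, inter_mem_PE hV' _, (hm.mono_left hWV).inter_succSet,
      Set.inter_subset_right⟩
  · rintro W ⟨V, hV, hWV⟩ p hp σ hσ z' hz'
    obtain ⟨x', V', hV', hx', hmem, hm⟩ := hReq V hV p (hWV hp) σ hσ z' hz'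
    exact ⟨x', V' ∩ SuccSet G R W σ, inter_mem_PE hV' _, hx', ⟨hmem, p, hp, hx', hz'⟩,
      (hm.mono_left hWV).inter_succSet, Set.inter_subset_right⟩
end

section
/- For a Σ_ucr-controllability set E from G to R, the automaton 𝒜(E) satisfies: for any sequence s ∈ Σ*, initial state W₀ of 𝒜(E) and state W of 𝒜(E), if W₀ →s W then the G-projection π_G(W) = {x : ∃ z, (x,z) ∈ W} equals the set Reach(s, X₀) = {x : x₀ →s x for some x₀ ∈ X₀} of s-reachable states of G. -/
namespace Automaton

variable {S E : Type} (G : Automaton S E)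

def post (A : Set S) (σ : E) : Set S :=
  {x' | ∃ x ∈ A, G.trans x σ x'}

def postSeq (A : Set S) (s : List E) : Set S :=
  {x' | ∃ x ∈ A, TransSeq G x s x'}

@[simp]
lemma postSeq_nil (A : Set S) : G.postSeq A [] = A := by
  ext x
  simp [postSeq, TransSeq]

lemma postSeq_cons (A : Set S) (σ : E) (s : List E) :
    G.postSeq A (σ :: s) = G.postSeq (G.post A σ) s := by
  ext x''
  simp only [postSeq, post, TransSeq, Set.mem_ofPred_eq]
  constructor
  · rintro ⟨x, hx, x', hstep, hrest⟩
    exact ⟨x', ⟨x, hx, hstep⟩, hrest⟩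
  · rintro ⟨x', ⟨x, hx, hstep⟩, hrest⟩
    exact ⟨x, hx, x', hstep, hrest⟩

end Automaton

section Projection

variable {X Z E : Type} {G : Automaton X E} {R : Automaton Z E}

open Automaton

lemma fst_image_eq_post_of_matchW {W W' : Set (X × Z)} {σ : E}
    (hmatch : MatchW G R W σ W') (hsucc : W' ⊆ SuccSet G R W σ) :
    Prod.fst '' W' = G.post (Prod.fst '' W) σ := by
  ext x'
  constructor
  · rintro ⟨q, hq, rfl⟩
    obtain ⟨p, hp, hstep, -⟩ := hsucc hq
    exact ⟨p.1, ⟨p, hp, rfl⟩, hstep⟩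
  · rintro ⟨-, ⟨p, hp, rfl⟩, hstep⟩
    obtain ⟨z', -, hz'⟩ := hmatch p hp x' hstep
    exact ⟨(x', z'), hz', rfl⟩

lemma fst_image_eq_postSeq_of_autA_transSeq {Ecs : Set (Set (X × Z))} :
    ∀ {W W' : Set (X × Z)} {s : List E}, TransSeq (AutA G R Ecs) W s W' →
      Prod.fst '' W' = G.postSeq (Prod.fst '' W) s
  | _, _, [], rfl => (G.postSeq_nil _).symm
  | _, _, _ :: _, ⟨_, ⟨_, _, _, hmatch, hsucc⟩, hrest⟩ => by
    rw [fst_image_eq_postSeq_of_autA_transSeq hrest, postSeq_cons,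
      fst_image_eq_post_of_matchW hmatch hsucc]

lemma fst_image_eq_init_of_mem_autA_init {Ecs : Set (Set (X × Z))} {W₀ : Set (X × Z)}
    (hW₀ : W₀ ∈ (AutA G R Ecs).init) : Prod.fst '' W₀ = G.init := by
  obtain ⟨-, hsub, hcover⟩ := hW₀
  ext x₀
  constructor
  · rintro ⟨p, hp, rfl⟩
    exact (hsub hp).1
  · intro hx₀
    obtain ⟨z₀, -, hz₀⟩ := hcover x₀ hx₀
    exact ⟨(x₀, z₀), hz₀, rfl⟩

end Projection

theorem autA_projection_eq_reach_general {E X Z : Type}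
    (G : Automaton X E) (R : Automaton Z E) (Ecs : Set (Set (X × Z)))
    (s : List E) (W₀ W : Set (X × Z))
    (hW₀ : W₀ ∈ (AutA G R Ecs).init)
    (hs : TransSeq (AutA G R Ecs) W₀ s W) :
    {x | ∃ z, (x, z) ∈ W} = {x | ReachSeq G s x} := by
  calc {x | ∃ z, (x, z) ∈ W} = Prod.fst '' W := by ext; simp
    _ = G.postSeq (Prod.fst '' W₀) s := fst_image_eq_postSeq_of_autA_transSeq hs
    _ = G.postSeq G.init s := by rw [fst_image_eq_init_of_mem_autA_init hW₀]

/-- for any state `W` of `𝒜(E)` reachable from an initial state via `s`,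
the `G`-projection of `W` equals the set of `s`-reachable states of `G`. -/
theorem autA_projection_eq_reach {E X Z : Type} (Suc Sr : Set E)
    (G : Automaton X E) (R : Automaton Z E) (Ecs : Set (Set (X × Z)))
    (hE : ControlSet Suc Sr G R Ecs) (s : List E) (W₀ W : Set (X × Z))
    (hW₀ : W₀ ∈ (AutA G R Ecs).init) (hW : W ∈ PE Ecs)
    (hs : TransSeq (AutA G R Ecs) W₀ s W) :
    {x | ∃ z, (x, z) ∈ W} = {x | ReachSeq G s x} :=
  autA_projection_eq_reach_general G R Ecs s W₀ W hW₀ hs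
end

section
/- Let G be a plant and R a specification, S a Σ_uc-admissible supervisor, and Φ a cc-simulation from S||G to R. Then the set E(Φ) = { θ_y : y ∈ Y }, where θ_y = { (x,z) : ((y,x),z) ∈ Φ and (y,x) is reachable in S||G }, is a Σ_ucr-controllability set from G to R. -/
theorem TransSeq.snoc {S E : Type} {G : Automaton S E} {σ : E} :
    ∀ {s : List E} {x x' x'' : S}, TransSeq G x s x' → G.trans x' σ x'' →
      TransSeq G x (s ++ [σ]) x''
  | [], _, _, _, rfl, h => ⟨_, h, rfl⟩
  | _ :: _, _, _, _, ⟨x₁, h₁, hs⟩, h => ⟨x₁, h₁, hs.snoc h⟩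

theorem Reachable.of_trans {S E : Type} {G : Automaton S E} {x x' : S} {σ : E}
    (h : Reachable G x) (h' : G.trans x σ x') : Reachable G x' := by
  obtain ⟨s, x₀, hx₀, hs⟩ := h
  exact ⟨s ++ [σ], x₀, hx₀, hs.snoc h'⟩

section Slice

variable {E X Y Z : Type} {S : Automaton Y E} {G : Automaton X E} {R : Automaton Z E}
  {Φ : Set ((Y × X) × Z)}

variable (S G Φ) in
/-- The set `θ_y` of the paper. -/
def reachableSlice (y : Y) : Set (X × Z) :=
  {p | ((y, p.1), p.2) ∈ Φ ∧ Reachable (Sync S G) (y, p.1)}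

theorem exists_mem_reachableSlice_of_init (hΦ : IsSimulation (Sync S G) R Φ) {y₀ : Y}
    (hy₀ : y₀ ∈ S.init) {x₀ : X} (hx₀ : x₀ ∈ G.init) :
    ∃ z₀ ∈ R.init, (x₀, z₀) ∈ reachableSlice S G Φ y₀ := by
  have hinit : (y₀, x₀) ∈ (Sync S G).init := Set.mk_mem_prod hy₀ hx₀
  obtain ⟨z₀, hz₀, hmem⟩ := hΦ.1 _ hinit
  exact ⟨z₀, hz₀, hmem, [], _, hinit, rfl⟩

theorem matchW_reachableSlice_of_trans (hΦ : IsSimulation (Sync S G) R Φ) {y y' : Y} {σ : E}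
    (hy : S.trans y σ y') :
    MatchW G R (reachableSlice S G Φ y) σ (reachableSlice S G Φ y') := by
  rintro ⟨x, z⟩ ⟨hxz, hreach⟩ x' hx
  have hstep : (Sync S G).trans (y, x) σ (y', x') := ⟨hy, hx⟩
  obtain ⟨z', hz, hmem⟩ := hΦ.2 _ hxz σ _ hstep
  exact ⟨z', hz, hmem, hreach.of_trans hstep⟩

theorem exists_matchW_reachableSlice {Suc : Set E} (hS : Admissible Suc S G)
    (hΦ : IsSimulation (Sync S G) R Φ) (y : Y) {σ : E} (hσ : σ ∈ Suc) :
    ∃ y', MatchW G R (reachableSlice S G Φ y) σ (reachableSlice S G Φ y') := by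
  by_cases hen : ∃ p ∈ reachableSlice S G Φ y, ∃ x', G.trans p.1 σ x'
  · obtain ⟨⟨x, z⟩, ⟨-, hreach⟩, hx⟩ := hen
    obtain ⟨q, hq, -⟩ := hS (y, x) hreach σ hσ hx
    exact ⟨q.1, matchW_reachableSlice_of_trans hΦ hq⟩
  · exact ⟨y, fun p hp x' hx => (hen ⟨p, hp, x', hx⟩).elim⟩

theorem exists_trans_mem_reachableSlice {Sr : Set E} (hΦ : IsCCSimulation Sr (Sync S G) R Φ)
    {y : Y} {p : X × Z} (hp : p ∈ reachableSlice S G Φ y) {σ : E} (hσ : σ ∈ Sr) {z' : Z}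
    (hz : R.trans p.2 σ z') :
    ∃ y' x', S.trans y σ y' ∧ G.trans p.1 σ x' ∧ (x', z') ∈ reachableSlice S G Φ y' := by
  obtain ⟨⟨y', x'⟩, hstep, hmem⟩ := hΦ.2 _ hp.1 σ hσ z' hz
  exact ⟨y', x', hstep.1, hstep.2, hmem, hp.2.of_trans hstep⟩

end Slice

/-- `E(Φ) = { θ_y : y ∈ Y }` is a `Σ_ucr`-controllability set. -/
theorem ePhi_controlSet {E X Z Y : Type} (Suc Sr : Set E)
    (G : Automaton X E) (R : Automaton Z E) (S : Automaton Y E)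
    (hY : S.init.Nonempty)
    (Φ : Set ((Y × X) × Z))
    (hS : Admissible Suc S G)
    (hΦ : IsCCSimulation Sr (Sync S G) R Φ) :
    ControlSet Suc Sr G R
      {W | ∃ y : Y, W = {p : X × Z |
        ((y, p.1), p.2) ∈ Φ ∧ Reachable (Sync S G) (y, p.1)}} := by
  change ControlSet Suc Sr G R {W | ∃ y, W = reachableSlice S G Φ y}
  obtain ⟨y₀, hy₀⟩ := hY
  refine ⟨⟨_, ⟨y₀, rfl⟩, fun x₀ hx₀ => exists_mem_reachableSlice_of_init hΦ.1 hy₀ hx₀⟩, ?_, ?_⟩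
  · rintro _ ⟨y, rfl⟩ σ hσ
    obtain ⟨y', hmatch⟩ := exists_matchW_reachableSlice hS hΦ.1 y hσ
    exact ⟨_, ⟨y', rfl⟩, hmatch⟩
  · rintro _ ⟨y, rfl⟩ p hp σ hσ z' hz
    obtain ⟨y', x', hy, hx, hmem⟩ := exists_trans_mem_reachableSlice hΦ hp hσ hz
    exact ⟨x', _, ⟨y', rfl⟩, hx, hmem, matchW_reachableSlice_of_trans hΦ.1 hy⟩
end

section
/- If Φ is a Σ_ucr-simulation from G to R that is uniform with respect to Σᵣ, then there exists a Σ_ucr-controllability set from G to R; concretely, E = { W_s : s ∈ Σ* } with W_s = { (x,z) ∈ Φ : x is s-reachable in G and z is s-reachable in R } is such a set. -/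
/-!
Let `W_s` be the set of pairs of `Φ` whose components are both `s`-reachable. Any
`σ`-successors of an `s`-reachable pair are `s σ`-reachable, so a `σ`-match inside `Φ` from
`W_s` is automatically a match from `W_s` into `W_{s σ}`. For uncontrollable events such
matches come from the forward clause of `Φ`; for a required event `σ` enabled at the
`R`-side of one pair of `W_s`, uniformity provides them for every pair of `W_s` at once.
-/

theorem TransSeq.append_singleton {S E : Type} {G : Automaton S E} {x y y' : S} {s : List E}
    {σ : E} (h : TransSeq G x s y) (h' : G.trans y σ y') : TransSeq G x (s ++ [σ]) y' := by
  induction s generalizing x with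
  | nil => exact ⟨y', h ▸ h', rfl⟩
  | cons a t ih =>
    obtain ⟨x₁, hx₁, ht⟩ := h
    exact ⟨x₁, hx₁, ih ht⟩

theorem ReachSeq.append_singleton {S E : Type} {G : Automaton S E} {y y' : S} {s : List E}
    {σ : E} (h : ReachSeq G s y) (h' : G.trans y σ y') : ReachSeq G (s ++ [σ]) y' :=
  let ⟨x₀, hx₀, ht⟩ := h
  ⟨x₀, hx₀, ht.append_singleton h'⟩

section ReachSlice

variable {X Z E : Type} {G : Automaton X E} {R : Automaton Z E} {Φ : Set (X × Z)}

def reachSlice (G : Automaton X E) (R : Automaton Z E) (Φ : Set (X × Z)) (s : List E) :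
    Set (X × Z) :=
  {p ∈ Φ | ReachSeq G s p.1 ∧ ReachSeq R s p.2}

theorem mem_reachSlice_append_singleton {s : List E} {σ : E} {p : X × Z} {x' : X} {z' : Z}
    (hp : p ∈ reachSlice G R Φ s) (hx' : G.trans p.1 σ x') (hz' : R.trans p.2 σ z')
    (hΦ' : (x', z') ∈ Φ) : (x', z') ∈ reachSlice G R Φ (s ++ [σ]) :=
  ⟨hΦ', hp.2.1.append_singleton hx', hp.2.2.append_singleton hz'⟩

theorem matchW_reachSlice_append_singleton {s : List E} {σ : E}
    (h : ∀ p ∈ reachSlice G R Φ s, ∀ x', G.trans p.1 σ x' →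
      ∃ z', R.trans p.2 σ z' ∧ (x', z') ∈ Φ) :
    MatchW G R (reachSlice G R Φ s) σ (reachSlice G R Φ (s ++ [σ])) := by
  intro p hp x' hx'
  obtain ⟨z', hz', hΦ'⟩ := h p hp x' hx'
  exact ⟨z', hz', mem_reachSlice_append_singleton hp hx' hz' hΦ'⟩

theorem IsUcSimulation.exists_init_mem_reachSlice_nil {Suc : Set E}
    (hΦ : IsUcSimulation Suc G R Φ) :
    ∀ x₀ ∈ G.init, ∃ z₀ ∈ R.init, (x₀, z₀) ∈ reachSlice G R Φ [] := by
  intro x₀ hx₀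
  obtain ⟨z₀, hz₀, hp⟩ := hΦ.1 x₀ hx₀
  exact ⟨z₀, hz₀, hp, ⟨x₀, hx₀, rfl⟩, ⟨z₀, hz₀, rfl⟩⟩

theorem IsUcSimulation.matchW_reachSlice {Suc : Set E} (hΦ : IsUcSimulation Suc G R Φ)
    (s : List E) {σ : E} (hσ : σ ∈ Suc) :
    MatchW G R (reachSlice G R Φ s) σ (reachSlice G R Φ (s ++ [σ])) :=
  matchW_reachSlice_append_singleton fun p hp => hΦ.2 p hp.1 σ hσ

theorem UniformRel.matchW_reachSlice {Sr : Set E} (hU : UniformRel Sr G R Φ) {s : List E}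
    {p : X × Z} (hp : p ∈ reachSlice G R Φ s) {σ : E} (hσ : σ ∈ Sr) {z' : Z}
    (hz' : R.trans p.2 σ z') :
    MatchW G R (reachSlice G R Φ s) σ (reachSlice G R Φ (s ++ [σ])) :=
  matchW_reachSlice_append_singleton fun q hq =>
    hU s p hp.1 q hq.1 hp.2.1 hq.2.1 hp.2.2 hq.2.2 σ hσ ⟨z', hz'⟩

theorem IsUcrSimulation.controlSet_reachSlices {Suc Sr : Set E}
    (hΦ : IsUcrSimulation Suc Sr G R Φ) (hU : UniformRel Sr G R Φ) :
    ControlSet Suc Sr G R {W | ∃ s : List E, W = reachSlice G R Φ s} := by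
  refine ⟨⟨_, ⟨[], rfl⟩, hΦ.1.exists_init_mem_reachSlice_nil⟩, ?_, ?_⟩
  · rintro W ⟨s, rfl⟩ σ hσ
    exact ⟨_, ⟨s ++ [σ], rfl⟩, hΦ.1.matchW_reachSlice s hσ⟩
  · rintro W ⟨s, rfl⟩ p hp σ hσ z' hz'
    obtain ⟨x', hx', hΦ'⟩ := hΦ.2 p hp.1 σ hσ z' hz'
    exact ⟨x', _, ⟨s ++ [σ], rfl⟩, hx', mem_reachSlice_append_singleton hp hx' hz' hΦ',
      hU.matchW_reachSlice hp hσ hz'⟩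

end ReachSlice

/-- a uniform `Σ_ucr`-simulation yields a `Σ_ucr`-controllability set,
namely `E = { W_s : s ∈ Σ* }`. -/
theorem uniform_ucrSimulation_controlSet {E X Z : Type} (Suc Sr : Set E)
    (G : Automaton X E) (R : Automaton Z E) (Φ : Set (X × Z))
    (hΦ : IsUcrSimulation Suc Sr G R Φ)
    (hU : UniformRel Sr G R Φ) :
    ControlSet Suc Sr G R
      {W | ∃ s : List E, W = {p ∈ Φ | ReachSeq G s p.1 ∧ ReachSeq R s p.2}} ∧
    ∃ Ecs : Set (Set (X × Z)), ControlSet Suc Sr G R Ecs :=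
  have hslices := hΦ.controlSet_reachSlices hU
  ⟨hslices, _, hslices⟩
end

section
/- For deterministic automata G and R, the (G,R)-similarity control problem with required events is solvable (i.e., there exists a Σ_uc-admissible supervisor S with S||G cc-simulated by R) if and only if G is Σ_ucr-simulated by R. -/
namespace TransSeq

variable {S E : Type} {G : Automaton S E}

theorem snoc_s13 {σ : E} : ∀ {s : List E} {x x' x'' : S},
    TransSeq G x s x' → G.trans x' σ x'' → TransSeq G x (s ++ [σ]) x''
  | [], _, _, _, rfl, ht => ⟨_, ht, rfl⟩
  | _ :: _, _, _, _, ⟨y, hy, hs⟩, ht => ⟨y, hy, snoc_s13 hs ht⟩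

theorem induction {P : S → Prop} (hstep : ∀ x σ x', P x → G.trans x σ x' → P x') :
    ∀ {s : List E} {x x' : S}, P x → TransSeq G x s x' → P x'
  | [], _, _, hx, rfl => hx
  | _ :: _, _, _, hx, ⟨_, hy, hs⟩ => induction hstep (hstep _ _ _ hx hy) hs

end TransSeq

namespace Reachable

variable {S E : Type} {G : Automaton S E}

theorem of_mem_init {x : S} (hx : x ∈ G.init) : Reachable G x :=
  ⟨[], x, hx, rfl⟩

theorem step {x x' : S} {σ : E} (hx : Reachable G x) (ht : G.trans x σ x') :
    Reachable G x' :=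
  let ⟨s, x₀, h₀, hs⟩ := hx
  ⟨s ++ [σ], x₀, h₀, hs.snoc_s13 ht⟩

theorem induction {P : S → Prop} (hinit : ∀ x ∈ G.init, P x)
    (hstep : ∀ x σ x', P x → G.trans x σ x' → P x') {x : S} (hx : Reachable G x) : P x :=
  let ⟨_, x₀, h₀, hs⟩ := hx
  TransSeq.induction hstep (hinit x₀ h₀) hs

end Reachable

namespace Deterministic

variable {S E : Type} {G : Automaton S E}

theorem eq_of_mem_init (hG : Deterministic G) {x x' : S} (hx : x ∈ G.init)
    (hx' : x' ∈ G.init) : x = x' := by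
  obtain ⟨⟨x₀, h₀⟩, -⟩ := hG
  rw [h₀] at hx hx'
  exact hx.trans hx'.symm

theorem eq_of_trans (hG : Deterministic G) {x x₁ x₂ : S} {σ : E} (h₁ : G.trans x σ x₁)
    (h₂ : G.trans x σ x₂) : x₁ = x₂ :=
  hG.2 x σ x₁ x₂ h₁ h₂

end Deterministic

section Solution

variable {E X Y Z : Type} {Suc Sr : Set E} {G : Automaton X E} {R : Automaton Z E}

theorem IsCCSimulation.exists_isUcrSimulation (hG : Deterministic G) {S : Automaton Y E}
    (hS₀ : S.init.Nonempty) (hS : Admissible Suc S G) {Φ : Set ((Y × X) × Z)}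
    (hΦ : IsCCSimulation Sr (Sync S G) R Φ) :
    ∃ Ψ : Set (X × Z), IsUcrSimulation Suc Sr G R Ψ := by
  obtain ⟨⟨hinit, hfwd⟩, hback⟩ := hΦ
  refine ⟨{p | ∃ y, Reachable (Sync S G) (y, p.1) ∧ ((y, p.1), p.2) ∈ Φ}, ⟨?_, ?_⟩, ?_⟩
  · intro x₀ hx₀
    obtain ⟨y₀, hy₀⟩ := hS₀
    obtain ⟨z₀, hz₀, hΦ₀⟩ := hinit (y₀, x₀) ⟨hy₀, hx₀⟩
    exact ⟨z₀, hz₀, y₀, .of_mem_init ⟨hy₀, hx₀⟩, hΦ₀⟩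
  · rintro ⟨x, z⟩ ⟨y, hreach, hyxz⟩ σ hσ x' hx'
    obtain ⟨⟨y', x''⟩, hy', hx''⟩ := hS (y, x) hreach σ hσ ⟨x', hx'⟩
    obtain rfl : x'' = x' := hG.eq_of_trans hx'' hx'
    obtain ⟨z', hz', hΦ'⟩ := hfwd _ hyxz σ (y', x'') ⟨hy', hx''⟩
    exact ⟨z', hz', y', hreach.step ⟨hy', hx''⟩, hΦ'⟩
  · rintro ⟨x, z⟩ ⟨y, hreach, hyxz⟩ σ hσ z' hz'
    obtain ⟨⟨y', x'⟩, htr, hΦ'⟩ := hback _ hyxz σ hσ z' hz'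
    exact ⟨x', htr.2, y', hreach.step htr, hΦ'⟩

def productOn (G : Automaton X E) (R : Automaton Z E) (Ψ : Set (X × Z)) :
    Automaton (X × Z) E where
  trans p σ q := G.trans p.1 σ q.1 ∧ R.trans p.2 σ q.2 ∧ p ∈ Ψ ∧ q ∈ Ψ
  init := {p | p.1 ∈ G.init ∧ p.2 ∈ R.init ∧ p ∈ Ψ}

theorem reachable_sync_productOn (hG : Deterministic G) {Ψ : Set (X × Z)}
    {p : (X × Z) × X} (hp : Reachable (Sync (productOn G R Ψ) G) p) :
    p ∈ (fun q => (q, q.1)) '' Ψ := by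
  refine hp.induction ?_ ?_
  · rintro ⟨⟨x, z⟩, x₂⟩ ⟨⟨hx, -, hΨ⟩, hx₂⟩
    obtain rfl : x₂ = x := hG.eq_of_mem_init hx₂ hx
    exact ⟨_, hΨ, rfl⟩
  · rintro _ σ ⟨⟨x', z'⟩, x₂'⟩ ⟨⟨x, z⟩, -, rfl⟩ ⟨⟨hx', -, -, hΨ'⟩, hx₂'⟩
    obtain rfl : x₂' = x' := hG.eq_of_trans hx₂' hx'
    exact ⟨_, hΨ', rfl⟩

theorem admissible_productOn (hG : Deterministic G) {Ψ : Set (X × Z)}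
    (hfwd : ∀ σ ∈ Suc, MatchW G R Ψ σ Ψ) : Admissible Suc (productOn G R Ψ) G := by
  rintro p hp σ hσ ⟨x', hx'⟩
  obtain ⟨⟨x, z⟩, hΨ, rfl⟩ := reachable_sync_productOn hG hp
  obtain ⟨z', hz', hΨ'⟩ := hfwd σ hσ _ hΨ x' hx'
  exact ⟨((x', z'), x'), ⟨hx', hz', hΨ, hΨ'⟩, hx'⟩

theorem isCCSimulation_sync_productOn (hG : Deterministic G) {Ψ : Set (X × Z)}
    (hback : ∀ p ∈ Ψ, ∀ σ ∈ Sr, ∀ z', R.trans p.2 σ z' →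
      ∃ x', G.trans p.1 σ x' ∧ (x', z') ∈ Ψ) :
    IsCCSimulation Sr (Sync (productOn G R Ψ) G) R ((fun p => ((p, p.1), p.2)) '' Ψ) := by
  refine ⟨⟨?_, ?_⟩, ?_⟩
  · rintro ⟨⟨x, z⟩, x₂⟩ ⟨⟨hx, hz, hΨ⟩, hx₂⟩
    obtain rfl : x₂ = x := hG.eq_of_mem_init hx₂ hx
    exact ⟨z, hz, _, hΨ, rfl⟩
  · rintro _ ⟨⟨x, z⟩, -, rfl⟩ σ ⟨⟨x', z'⟩, x₂'⟩ ⟨⟨hx', hz', -, hΨ'⟩, hx₂'⟩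
    obtain rfl : x₂' = x' := hG.eq_of_trans hx₂' hx'
    exact ⟨z', hz', _, hΨ', rfl⟩
  · rintro _ ⟨⟨x, z⟩, hΨ, rfl⟩ σ hσ z' hz'
    obtain ⟨x', hx', hΨ'⟩ := hback _ hΨ σ hσ z' hz'
    exact ⟨((x', z'), x'), ⟨⟨hx', hz', hΨ, hΨ'⟩, hx'⟩, _, hΨ', rfl⟩

end Solution

theorem deterministic_solvable_iff_ucrSimulated_general {E X Z : Type} (Suc Sr : Set E)
    (G : Automaton X E) (R : Automaton Z E)
    (hG : Deterministic G) :
    (∃ (Y : Type) (S : Automaton Y E), S.init.Nonempty ∧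
      Admissible Suc S G ∧ CCSimulated Sr (Sync S G) R) ↔
    (∃ Φ : Set (X × Z), IsUcrSimulation Suc Sr G R Φ) := by
  constructor
  · rintro ⟨Y, S, hS₀, hS, Φ, hΦ⟩
    exact hΦ.exists_isUcrSimulation hG hS₀ hS
  · rintro ⟨Ψ, ⟨hinit, hfwd⟩, hback⟩
    obtain ⟨x₀, hx₀⟩ := hG.1
    obtain ⟨z₀, hz₀, hΨ₀⟩ := hinit x₀ (hx₀ ▸ rfl)
    exact ⟨X × Z, productOn G R Ψ, ⟨(x₀, z₀), hx₀ ▸ rfl, hz₀, hΨ₀⟩,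
      admissible_productOn hG fun σ hσ p hp => hfwd p hp σ hσ,
      _, isCCSimulation_sync_productOn hG hback⟩

/-- for deterministic `G` and `R`, the similarity control problem with
required events is solvable iff `G` is `Σ_ucr`-simulated by `R`. -/
theorem deterministic_solvable_iff_ucrSimulated {E X Z : Type} (Suc Sr : Set E)
    (G : Automaton X E) (R : Automaton Z E)
    (hG : Deterministic G) (hR : Deterministic R) :
    (∃ (Y : Type) (S : Automaton Y E), S.init.Nonempty ∧
      Admissible Suc S G ∧ CCSimulated Sr (Sync S G) R) ↔
    (∃ Φ : Set (X × Z), IsUcrSimulation Suc Sr G R Φ) :=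
  deterministic_solvable_iff_ucrSimulated_general Suc Sr G R hG
end

section
/- There exists a Σ_ucr-controllability set from G to R if and only if the greatest fixpoint E↑ of the monotone operator F_{(G,R)} contains some W₀ with the property that for every x₀ ∈ X₀ there exists z₀ ∈ Z₀ with (x₀, z₀) ∈ W₀. -/
/-! A controllability set is exactly a post-fixpoint of `F_{(G,R)}` containing an initial
witness. Every post-fixpoint lies below the greatest fixpoint `E↑`, and `E↑` is itself a
post-fixpoint (Knaster–Tarski), so a witness in some controllability set is a witness in `E↑`,
and conversely `E↑` is a controllability set as soon as it contains a witness. -/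

section Gfp

variable {E X Z : Type} (Suc Sr : Set E) (G : Automaton X E) (R : Automaton Z E)

theorem fop_mono : Monotone (Fop Suc Sr G R) := by
  rintro A B hAB W ⟨hW, huc, hr⟩
  refine ⟨hAB hW, fun σ hσ => ?_, fun p hp σ hσ z' hz' => ?_⟩
  · obtain ⟨W', hW', hm⟩ := huc σ hσ
    exact ⟨W', hAB hW', hm⟩
  · obtain ⟨x', W', hW', hx', hz'W', hm⟩ := hr p hp σ hσ z' hz'
    exact ⟨x', W', hAB hW', hx', hz'W', hm⟩

def fopOrderHom : Set (Set (X × Z)) →o Set (Set (X × Z)) :=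
  ⟨Fop Suc Sr G R, fop_mono Suc Sr G R⟩

theorem egfp_eq_gfp : Egfp Suc Sr G R = OrderHom.gfp (fopOrderHom Suc Sr G R) := rfl

theorem subset_egfp_of_subset_fop {Ecs : Set (Set (X × Z))} (h : Ecs ⊆ Fop Suc Sr G R Ecs) :
    Ecs ⊆ Egfp Suc Sr G R :=
  (egfp_eq_gfp Suc Sr G R).symm ▸ OrderHom.le_gfp _ h

theorem egfp_subset_fop : Egfp Suc Sr G R ⊆ Fop Suc Sr G R (Egfp Suc Sr G R) :=
  (egfp_eq_gfp Suc Sr G R).symm ▸ (OrderHom.isFixedPt_gfp (fopOrderHom Suc Sr G R)).ge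

theorem controlSet_iff {Ecs : Set (Set (X × Z))} :
    ControlSet Suc Sr G R Ecs ↔
      (∃ W₀ ∈ Ecs, ∀ x₀ ∈ G.init, ∃ z₀ ∈ R.init, (x₀, z₀) ∈ W₀) ∧
        Ecs ⊆ Fop Suc Sr G R Ecs := by
  refine and_congr_right fun _ => ⟨fun ⟨huc, hr⟩ W hW => ⟨hW, huc W hW, hr W hW⟩, fun h => ?_⟩
  exact ⟨fun W hW => (h hW).2.1, fun W hW => (h hW).2.2⟩

end Gfp

/-- a `Σ_ucr`-controllability set exists iff the greatest fixpoint `E↑`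
of `F_{(G,R)}` contains a witness for the initial-state condition. -/
theorem controlSet_exists_iff_gfp_witness {E X Z : Type} (Suc Sr : Set E)
    (G : Automaton X E) (R : Automaton Z E) :
    (∃ Ecs : Set (Set (X × Z)), ControlSet Suc Sr G R Ecs) ↔
      ∃ W₀ ∈ Egfp Suc Sr G R, ∀ x₀ ∈ G.init, ∃ z₀ ∈ R.init, (x₀, z₀) ∈ W₀ := by
  simp only [controlSet_iff]
  constructor
  · rintro ⟨Ecs, ⟨W₀, hW₀, hinit⟩, hpost⟩
    exact ⟨W₀, subset_egfp_of_subset_fop Suc Sr G R hpost hW₀, hinit⟩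
  · intro hwitness
    exact ⟨Egfp Suc Sr G R, hwitness, egfp_subset_fop Suc Sr G R⟩
end
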